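/- arXiv:2303.00023 — 2 statements merged into one kernel-verified Lean document; each statement's English description precedes it below -/
import Mathlib

section
/- Let f₁, f₂, g ∈ ℓ²(ℤ²) (respectively g ∈ ℓ²(ℤ)) be nonnegative and let α > 1/4. Then ∑_{h₂, k₂ ∈ ℤ, h₂ ≠ 0} (1/|h₂|^{2α}) g(k₂) ∑_{h₁ ∈ ℤ} f₁(h₁, h₂) f₂(-h₁, k₂ - h₂) ≤ C ‖f₁‖_{ℓ²} ‖f₂‖_{ℓ²} ‖g‖_{ℓ²}, for a constant C depending only on α. -/
open Real

/-- Translation equivalence on `ℤ`. -/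
def etr (h₂ : ℤ) : ℤ ≃ ℤ :=
  ⟨fun k => k - h₂, fun k => k + h₂, fun k => by ring, fun k => by ring⟩

/-- Cauchy–Schwarz for tsums of nonnegative sequences. -/
lemma tsum_cs {ι : Type*} (u v : ι → ℝ) (hu0 : ∀ i, 0 ≤ u i) (hv0 : ∀ i, 0 ≤ v i)
    (hu : Summable fun i => u i ^ 2) (hv : Summable fun i => v i ^ 2) :
    ∑' i, u i * v i ≤ Real.sqrt (∑' i, u i ^ 2) * Real.sqrt (∑' i, v i ^ 2) := by
  refine tsum_le_of_sum_le' (by positivity) fun s => ?_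
  calc ∑ i ∈ s, u i * v i
      ≤ Real.sqrt (∑ i ∈ s, u i ^ 2) * Real.sqrt (∑ i ∈ s, v i ^ 2) :=
        Real.sum_mul_le_sqrt_mul_sqrt s u v
    _ ≤ Real.sqrt (∑' i, u i ^ 2) * Real.sqrt (∑' i, v i ^ 2) := by
        gcongr
        · exact Summable.sum_le_tsum s (fun i _ => sq_nonneg _) hu
        · exact Summable.sum_le_tsum s (fun i _ => sq_nonneg _) hv

lemma summable_mul_sq {ι : Type*} (u v : ι → ℝ) (hu0 : ∀ i, 0 ≤ u i) (hv0 : ∀ i, 0 ≤ v i)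
    (hu : Summable fun i => u i ^ 2) (hv : Summable fun i => v i ^ 2) :
    Summable fun i => u i * v i := by
  refine Summable.of_nonneg_of_le (fun i => mul_nonneg (hu0 i) (hv0 i)) (fun i => ?_)
    (((hu.add hv).div_const 2))
  have h := sq_nonneg (u i - v i)
  nlinarith

set_option maxHeartbeats 2000000 in
theorem stmt2 (α : ℝ) (hα : 1 / 4 < α) :
    ∃ C : ℝ, 0 < C ∧ ∀ (f₁ f₂ : ℤ × ℤ → ℝ) (g : ℤ → ℝ),
      (∀ p, 0 ≤ f₁ p) → (∀ p, 0 ≤ f₂ p) → (∀ k, 0 ≤ g k) →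
      Summable (fun p => f₁ p ^ 2) → Summable (fun p => f₂ p ^ 2) →
      Summable (fun k => g k ^ 2) →
      (∑' (h₂ : {h : ℤ // h ≠ 0}) (k₂ : ℤ),
          (1 / |(h₂.1 : ℝ)| ^ (2 * α)) * g k₂ *
            ∑' h₁ : ℤ, f₁ (h₁, h₂.1) * f₂ (-h₁, k₂ - h₂.1))
        ≤ C * Real.sqrt (∑' p, f₁ p ^ 2) * Real.sqrt (∑' p, f₂ p ^ 2) *
            Real.sqrt (∑' k, g k ^ 2) := by
  -- weight
  set w : ℤ → ℝ := fun h => 1 / |(h : ℝ)| ^ (2 * α) with hw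
  have hw0 : ∀ h, 0 ≤ w h := fun h => by positivity
  have hwsum : Summable fun h : {h : ℤ // h ≠ 0} => w h.1 ^ 2 := by
    have h1 : Summable fun n : ℤ => |(n : ℝ)| ^ (-(4 * α)) :=
      summable_abs_int_rpow (by linarith)
    refine (h1.subtype _).congr fun h => ?_
    simp only [Function.comp_apply, hw]
    rw [Real.rpow_neg (abs_nonneg _), div_pow, one_pow, one_div,
      ← Real.rpow_natCast (|(h.1 : ℝ)| ^ (2 * α)) 2, ← Real.rpow_mul (abs_nonneg _)]
    norm_num
    congr 1
    ring
  refine ⟨Real.sqrt (∑' h : {h : ℤ // h ≠ 0}, w h.1 ^ 2) + 1, by positivity,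
    fun f₁ f₂ g h₁0 h₂0 hg0 hf₁ hf₂ hg => ?_⟩
  set N₁ := Real.sqrt (∑' p, f₁ p ^ 2) with hN₁
  set N₂ := Real.sqrt (∑' p, f₂ p ^ 2) with hN₂
  set Ng := Real.sqrt (∑' k, g k ^ 2) with hNg
  have hN₁0 : 0 ≤ N₁ := Real.sqrt_nonneg _
  have hN₂0 : 0 ≤ N₂ := Real.sqrt_nonneg _
  have hNg0 : 0 ≤ Ng := Real.sqrt_nonneg _
  -- swapped summability
  have hf₁s : Summable fun p : ℤ × ℤ => f₁ (p.2, p.1) ^ 2 :=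
    ((Equiv.prodComm ℤ ℤ).summable_iff).2 hf₁
  have hf₂s : Summable fun p : ℤ × ℤ => f₂ (p.2, p.1) ^ 2 :=
    ((Equiv.prodComm ℤ ℤ).summable_iff).2 hf₂
  -- column norms
  set A : ℤ → ℝ := fun h₂ => Real.sqrt (∑' h₁, f₁ (h₁, h₂) ^ 2) with hA
  set B : ℤ → ℝ := fun m => Real.sqrt (∑' h₁, f₂ (h₁, m) ^ 2) with hB
  have hAcol : ∀ h₂ : ℤ, Summable fun h₁ => f₁ (h₁, h₂) ^ 2 := fun h₂ => hf₁s.prod_factor h₂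
  have hBcol : ∀ m : ℤ, Summable fun h₁ => f₂ (h₁, m) ^ 2 := fun m => hf₂s.prod_factor m
  have hAsq : ∀ h₂, A h₂ ^ 2 = ∑' h₁, f₁ (h₁, h₂) ^ 2 := fun h₂ =>
    Real.sq_sqrt (tsum_nonneg fun _ => sq_nonneg _)
  have hBsq : ∀ m, B m ^ 2 = ∑' h₁, f₂ (h₁, m) ^ 2 := fun m =>
    Real.sq_sqrt (tsum_nonneg fun _ => sq_nonneg _)
  have hAsum : Summable fun h₂ => A h₂ ^ 2 := by
    refine (hf₁s.prod).congr fun h₂ => (hAsq h₂).symm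
  have hBsum : Summable fun m => B m ^ 2 := by
    refine (hf₂s.prod).congr fun m => (hBsq m).symm
  have hA0 : ∀ h₂, 0 ≤ A h₂ := fun _ => Real.sqrt_nonneg _
  have hB0 : ∀ m, 0 ≤ B m := fun _ => Real.sqrt_nonneg _
  have htotA : ∑' h₂, A h₂ ^ 2 = ∑' p, f₁ p ^ 2 := by
    rw [tsum_congr hAsq, ← Summable.tsum_prod hf₁s, ← (Equiv.prodComm ℤ ℤ).tsum_eq]
    rfl
  have htotB : ∑' m, B m ^ 2 = ∑' p, f₂ p ^ 2 := by
    rw [tsum_congr hBsq, ← Summable.tsum_prod hf₂s, ← (Equiv.prodComm ℤ ℤ).tsum_eq]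
    rfl
  -- Step 1 : inner sum bound
  have step1 : ∀ (h₂ k₂ : ℤ), (∑' h₁ : ℤ, f₁ (h₁, h₂) * f₂ (-h₁, k₂ - h₂))
      ≤ A h₂ * B (k₂ - h₂) := by
    intro h₂ k₂
    have hvsum : Summable fun h₁ : ℤ => f₂ (-h₁, k₂ - h₂) ^ 2 :=
      ((Equiv.neg ℤ).summable_iff).2 (hBcol (k₂ - h₂))
    have := tsum_cs (fun h₁ => f₁ (h₁, h₂)) (fun h₁ => f₂ (-h₁, k₂ - h₂))
      (fun _ => h₁0 _) (fun _ => h₂0 _) (hAcol h₂) hvsum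
    refine this.trans_eq ?_
    congr 1
    rw [hB]
    congr 1
    exact (Equiv.neg ℤ).tsum_eq fun h₁ => f₂ (h₁, k₂ - h₂) ^ 2
  -- Step 2 : sum over k₂
  have step2 : ∀ h₂ : ℤ, (∑' k₂ : ℤ, g k₂ * B (k₂ - h₂)) ≤ Ng * N₂ := by
    intro h₂
    have hBtr : Summable fun k₂ : ℤ => B (k₂ - h₂) ^ 2 :=
      ((etr h₂).summable_iff).2 hBsum
    have := tsum_cs g (fun k₂ => B (k₂ - h₂)) hg0 (fun _ => hB0 _) hg hBtr
    refine this.trans_eq ?_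
    congr 1
    rw [hN₂, ← htotB]
    congr 1
    exact (etr h₂).tsum_eq fun m => B m ^ 2
  -- summability of dominating functions
  have hgB : ∀ h₂ : ℤ, Summable fun k₂ => g k₂ * B (k₂ - h₂) := fun h₂ =>
    summable_mul_sq g (fun k₂ => B (k₂ - h₂)) hg0 (fun _ => hB0 _) hg
      (((etr h₂).summable_iff).2 hBsum)
  -- Step: bound the k₂ sum of the full term
  have step3 : ∀ h₂ : {h : ℤ // h ≠ 0},
      (∑' k₂ : ℤ, (1 / |(h₂.1 : ℝ)| ^ (2 * α)) * g k₂ *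
        ∑' h₁ : ℤ, f₁ (h₁, h₂.1) * f₂ (-h₁, k₂ - h₂.1))
      ≤ w h₂.1 * A h₂.1 * (Ng * N₂) := by
    intro h₂
    have hdom : Summable fun k₂ : ℤ => w h₂.1 * A h₂.1 * (g k₂ * B (k₂ - h₂.1)) :=
      (hgB h₂.1).mul_left _
    have hle : ∀ k₂ : ℤ, (1 / |(h₂.1 : ℝ)| ^ (2 * α)) * g k₂ *
        (∑' h₁ : ℤ, f₁ (h₁, h₂.1) * f₂ (-h₁, k₂ - h₂.1))
        ≤ w h₂.1 * A h₂.1 * (g k₂ * B (k₂ - h₂.1)) := by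
      intro k₂
      have h1 := step1 h₂.1 k₂
      have : (1 / |(h₂.1 : ℝ)| ^ (2 * α)) * g k₂ *
          (∑' h₁ : ℤ, f₁ (h₁, h₂.1) * f₂ (-h₁, k₂ - h₂.1))
          ≤ w h₂.1 * g k₂ * (A h₂.1 * B (k₂ - h₂.1)) := by
        rw [hw]
        exact mul_le_mul_of_nonneg_left h1 (mul_nonneg (by positivity) (hg0 k₂))
      refine this.trans_eq (by ring)
    calc (∑' k₂ : ℤ, (1 / |(h₂.1 : ℝ)| ^ (2 * α)) * g k₂ *
        ∑' h₁ : ℤ, f₁ (h₁, h₂.1) * f₂ (-h₁, k₂ - h₂.1))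
        ≤ ∑' k₂ : ℤ, w h₂.1 * A h₂.1 * (g k₂ * B (k₂ - h₂.1)) := by
          refine Summable.tsum_le_tsum hle ?_ hdom
          refine Summable.of_nonneg_of_le (fun k₂ => ?_) hle hdom
          have : 0 ≤ ∑' h₁ : ℤ, f₁ (h₁, h₂.1) * f₂ (-h₁, k₂ - h₂.1) :=
            tsum_nonneg fun _ => mul_nonneg (h₁0 _) (h₂0 _)
          exact mul_nonneg (mul_nonneg (by positivity) (hg0 k₂)) this
      _ = w h₂.1 * A h₂.1 * ∑' k₂ : ℤ, g k₂ * B (k₂ - h₂.1) := (tsum_mul_left)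
      _ ≤ w h₂.1 * A h₂.1 * (Ng * N₂) := by
          refine mul_le_mul_of_nonneg_left (step2 h₂.1) ?_
          exact mul_nonneg (hw0 _) (hA0 _)
  -- Step 4 : sum over h₂
  have hAsub : Summable fun h₂ : {h : ℤ // h ≠ 0} => A h₂.1 ^ 2 := hAsum.subtype _
  have hwA : Summable fun h₂ : {h : ℤ // h ≠ 0} => w h₂.1 * A h₂.1 :=
    summable_mul_sq _ _ (fun h => hw0 _) (fun h => hA0 _) hwsum hAsub
  have hdom2 : Summable fun h₂ : {h : ℤ // h ≠ 0} => w h₂.1 * A h₂.1 * (Ng * N₂) :=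
    hwA.mul_right _
  have hterm0 : ∀ h₂ : {h : ℤ // h ≠ 0},
      0 ≤ ∑' k₂ : ℤ, (1 / |(h₂.1 : ℝ)| ^ (2 * α)) * g k₂ *
        ∑' h₁ : ℤ, f₁ (h₁, h₂.1) * f₂ (-h₁, k₂ - h₂.1) := by
    intro h₂
    refine tsum_nonneg fun k₂ => ?_
    have : 0 ≤ ∑' h₁ : ℤ, f₁ (h₁, h₂.1) * f₂ (-h₁, k₂ - h₂.1) :=
      tsum_nonneg fun _ => mul_nonneg (h₁0 _) (h₂0 _)
    exact mul_nonneg (mul_nonneg (by positivity) (hg0 k₂)) this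
  calc (∑' (h₂ : {h : ℤ // h ≠ 0}) (k₂ : ℤ),
          (1 / |(h₂.1 : ℝ)| ^ (2 * α)) * g k₂ *
            ∑' h₁ : ℤ, f₁ (h₁, h₂.1) * f₂ (-h₁, k₂ - h₂.1))
      ≤ ∑' h₂ : {h : ℤ // h ≠ 0}, w h₂.1 * A h₂.1 * (Ng * N₂) := by
        refine Summable.tsum_le_tsum step3 ?_ hdom2
        exact Summable.of_nonneg_of_le hterm0 step3 hdom2
    _ = (∑' h₂ : {h : ℤ // h ≠ 0}, w h₂.1 * A h₂.1) * (Ng * N₂) := tsum_mul_right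
    _ ≤ (Real.sqrt (∑' h₂ : {h : ℤ // h ≠ 0}, w h₂.1 ^ 2) *
          Real.sqrt (∑' h₂ : {h : ℤ // h ≠ 0}, A h₂.1 ^ 2)) * (Ng * N₂) := by
        refine mul_le_mul_of_nonneg_right ?_ (mul_nonneg hNg0 hN₂0)
        exact tsum_cs _ _ (fun h => hw0 _) (fun h => hA0 _) hwsum hAsub
    _ ≤ ((Real.sqrt (∑' h : {h : ℤ // h ≠ 0}, w h.1 ^ 2) + 1) * N₁) * (Ng * N₂) := by
        refine mul_le_mul_of_nonneg_right ?_ (mul_nonneg hNg0 hN₂0)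
        refine mul_le_mul ?_ ?_ (Real.sqrt_nonneg _) (by positivity)
        · linarith [Real.sqrt_nonneg (∑' h : {h : ℤ // h ≠ 0}, w h.1 ^ 2)]
        · rw [hN₁, ← htotA]
          refine Real.sqrt_le_sqrt ?_
          exact Summable.tsum_subtype_le (fun h₂ => A h₂ ^ 2) _ (fun _ => sq_nonneg _) hAsum
    _ = (Real.sqrt (∑' h : {h : ℤ // h ≠ 0}, w h.1 ^ 2) + 1) * N₁ * N₂ * Ng := by ring
end

section
/- Let α > 1/2 and s ≥ 0, and let f₁, g : ℤ² → ℝ be nonnegative ℓ² sequences supported away from 0. Then ∑_{k = h + m, h ≠ 0, m ≠ 0} (|k|^{s-2α} / (|h|^{s+1} |m|^{s-1})) f₁(h) f₁(m) g(k) ≤ C ‖f₁‖²_{ℓ²} ‖g‖_{ℓ²}, restricted to the region |h| ≫ |m| (i.e. |h| ≥ 2|m|), where C depends only on α and s. -/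
/-- Euclidean norm on the lattice `ℤ × ℤ`. -/
noncomputable def latNorm (p : ℤ × ℤ) : ℝ := Real.sqrt ((p.1 : ℝ) ^ 2 + (p.2 : ℝ) ^ 2)

lemma latNorm_nonneg (p : ℤ × ℤ) : 0 ≤ latNorm p := Real.sqrt_nonneg _

lemma latNorm_eq_abs (p : ℤ × ℤ) : latNorm p = ‖(⟨(p.1 : ℝ), (p.2 : ℝ)⟩ : ℂ)‖ := by
  rw [latNorm, Complex.norm_def, Complex.normSq_mk]
  ring_nf

lemma latNorm_add_le (p q : ℤ × ℤ) : latNorm (p + q) ≤ latNorm p + latNorm q := by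
  rw [latNorm_eq_abs, latNorm_eq_abs, latNorm_eq_abs]
  have h : (⟨(((p + q).1 : ℤ) : ℝ), (((p + q).2 : ℤ) : ℝ)⟩ : ℂ)
      = (⟨(p.1 : ℝ), (p.2 : ℝ)⟩ : ℂ) + ⟨(q.1 : ℝ), (q.2 : ℝ)⟩ := by
    apply Complex.ext <;> simp [Prod.fst_add, Prod.snd_add]
  rw [h]
  exact norm_add_le _ _

lemma latNorm_neg (p : ℤ × ℤ) : latNorm (-p) = latNorm p := by
  rw [latNorm, latNorm]
  simp only [Prod.fst_neg, Prod.snd_neg, Int.cast_neg]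
  ring_nf

lemma latNorm_le_add (p q : ℤ × ℤ) : latNorm p ≤ latNorm (p + q) + latNorm q := by
  have h := latNorm_add_le (p + q) (-q)
  rw [add_neg_cancel_right, latNorm_neg] at h
  exact h

lemma one_le_latNorm {p : ℤ × ℤ} (hp : p ≠ 0) : 1 ≤ latNorm p := by
  have h : (1 : ℝ) ≤ (p.1 : ℝ) ^ 2 + (p.2 : ℝ) ^ 2 := by
    have h1 : p.1 ≠ 0 ∨ p.2 ≠ 0 := by
      by_contra hc
      push_neg at hc
      exact hp (Prod.ext hc.1 hc.2)
    have : (1 : ℤ) ≤ p.1 ^ 2 + p.2 ^ 2 := by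
      rcases h1 with h1 | h1
      · have := Int.one_le_abs (by simpa using h1)
        nlinarith [sq_nonneg p.2, sq_abs p.1]
      · have := Int.one_le_abs (by simpa using h1)
        nlinarith [sq_nonneg p.1, sq_abs p.2]
    exact_mod_cast this
  calc (1 : ℝ) = Real.sqrt 1 := Real.sqrt_one.symm
    _ ≤ latNorm p := Real.sqrt_le_sqrt h

lemma latNorm_zero : latNorm 0 = 0 := by simp [latNorm]

/-- Cauchy–Schwarz for infinite sums of nonnegative reals. -/
lemma tsum_mul_le_sqrt {ι : Type*} {a b : ι → ℝ} (ha : ∀ i, 0 ≤ a i) (hb : ∀ i, 0 ≤ b i)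
    (hsa : Summable fun i => a i ^ 2) (hsb : Summable fun i => b i ^ 2) :
    Summable (fun i => a i * b i) ∧
      ∑' i, a i * b i ≤ Real.sqrt (∑' i, a i ^ 2) * Real.sqrt (∑' i, b i ^ 2) := by
  have hsum : Summable fun i => a i * b i := by
    apply Summable.of_nonneg_of_le (fun i => mul_nonneg (ha i) (hb i))
      (fun i => ?_) ((hsa.add hsb).div_const 2)
    nlinarith [sq_nonneg (a i - b i)]
  refine ⟨hsum, Summable.tsum_le_of_sum_le hsum fun u => ?_⟩
  have h1 := Finset.sum_mul_sq_le_sq_mul_sq u a b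
  have h2 : ∑ i ∈ u, a i * b i ≤ Real.sqrt ((∑ i ∈ u, a i ^ 2) * ∑ i ∈ u, b i ^ 2) := by
    rw [show ∑ i ∈ u, a i * b i = Real.sqrt ((∑ i ∈ u, a i * b i) ^ 2) from
      (Real.sqrt_sq (Finset.sum_nonneg fun i _ => mul_nonneg (ha i) (hb i))).symm]
    exact Real.sqrt_le_sqrt h1
  refine h2.trans ?_
  rw [Real.sqrt_mul (Finset.sum_nonneg fun i _ => sq_nonneg _)]
  exact mul_le_mul (Real.sqrt_le_sqrt (Summable.sum_le_tsum u (fun i _ => sq_nonneg _) hsa))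
    (Real.sqrt_le_sqrt (Summable.sum_le_tsum u (fun i _ => sq_nonneg _) hsb))
    (Real.sqrt_nonneg _) (Real.sqrt_nonneg _)

/-- Summability of negative powers of the Euclidean norm on the lattice. -/
lemma summable_latNorm_rpow {r : ℝ} (hr : 2 < r) :
    Summable fun m : ℤ × ℤ => latNorm m ^ (-r) := by
  have h1 : Summable fun x : Fin 2 → ℤ => ‖x‖ ^ (-r) :=
    EisensteinSeries.summable_one_div_norm_rpow hr
  have h2 : Summable fun m : ℤ × ℤ => ‖(finTwoArrowEquiv ℤ).symm m‖ ^ (-r) :=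
    ((finTwoArrowEquiv ℤ).symm.summable_iff).2 h1
  apply h2.of_nonneg_of_le (fun m => Real.rpow_nonneg (latNorm_nonneg m) _)
  intro m
  by_cases hm : m = 0
  · subst hm
    rw [latNorm_zero, Real.zero_rpow (by intro hcon; simp at hcon; linarith)]
    positivity
  · have hx : (finTwoArrowEquiv ℤ).symm m ≠ 0 :=
      fun h0 => hm (by have h1 := congrArg (finTwoArrowEquiv ℤ) h0; simp at h1; exact h1)
    have hxpos : 0 < ‖(finTwoArrowEquiv ℤ).symm m‖ := norm_pos_iff.mpr hx
    apply Real.rpow_le_rpow_of_nonpos hxpos ?_ (by linarith)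
    rw [latNorm, pi_norm_le_iff_of_nonneg (Real.sqrt_nonneg _)]
    intro i
    fin_cases i <;>
      simp only [finTwoArrowEquiv_symm_apply, Matrix.cons_val_zero, Matrix.cons_val_one,
        Matrix.head_cons, Int.norm_eq_abs, Fin.isValue, Fin.zero_eta, Fin.mk_one] <;>
    · rw [← Real.sqrt_sq_eq_abs]
      apply Real.sqrt_le_sqrt
      nlinarith [sq_nonneg ((m.1 : ℝ)), sq_nonneg ((m.2 : ℝ))]

/-- Kernel estimate in the high-low regime `2|m| ≤ |h|`. -/
lemma kernel_bound {α s : ℝ} (hα : 1 / 2 < α) (hs : 0 ≤ s) {h m : ℤ × ℤ}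
    (hh : h ≠ 0) (hm : m ≠ 0) (hle : 2 * latNorm m ≤ latNorm h) :
    latNorm (h + m) ^ (s - 2 * α) / (latNorm h ^ (s + 1) * latNorm m ^ (s - 1))
      ≤ (2 ^ (s - 2 * α) + 2 ^ (2 * α - s)) * latNorm m ^ (-(2 * α + s)) := by
  have hb1 : 1 ≤ latNorm m := one_le_latNorm hm
  have hb0 : (0 : ℝ) < latNorm m := lt_of_lt_of_le one_pos hb1
  have ha0 : (0 : ℝ) < latNorm h := lt_of_lt_of_le (by linarith) hle
  have hk_low : latNorm h / 2 ≤ latNorm (h + m) := by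
    have := latNorm_le_add h m
    linarith
  have hk_hi : latNorm (h + m) ≤ 2 * latNorm h := by
    have := latNorm_add_le h m
    linarith
  have hk0 : (0 : ℝ) < latNorm (h + m) := lt_of_lt_of_le (by linarith) hk_low
  have hc₁0 : (0 : ℝ) ≤ 2 ^ (s - 2 * α) + 2 ^ (2 * α - s) := by positivity
  have step1 : latNorm (h + m) ^ (s - 2 * α)
      ≤ (2 ^ (s - 2 * α) + 2 ^ (2 * α - s)) * latNorm h ^ (s - 2 * α) := by
    have hae : (0 : ℝ) ≤ latNorm h ^ (s - 2 * α) := Real.rpow_nonneg ha0.le _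
    rcases le_or_gt 0 (s - 2 * α) with he | he
    · have h1 : latNorm (h + m) ^ (s - 2 * α) ≤ (2 * latNorm h) ^ (s - 2 * α) :=
        Real.rpow_le_rpow hk0.le hk_hi he
      rw [Real.mul_rpow (by norm_num) ha0.le] at h1
      have h2 : (0 : ℝ) ≤ 2 ^ (2 * α - s) * latNorm h ^ (s - 2 * α) := by positivity
      nlinarith
    · have h1 : latNorm (h + m) ^ (s - 2 * α) ≤ (latNorm h / 2) ^ (s - 2 * α) :=
        Real.rpow_le_rpow_of_nonpos (by linarith) hk_low he.le
      have h2 : (latNorm h / 2) ^ (s - 2 * α) = 2 ^ (2 * α - s) * latNorm h ^ (s - 2 * α) := by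
        rw [Real.div_rpow ha0.le (by norm_num : (0:ℝ) ≤ 2), div_eq_mul_inv,
          ← Real.rpow_neg (by norm_num : (0:ℝ) ≤ 2)]
        rw [show -(s - 2 * α) = 2 * α - s by ring]
        ring
      have h3 : (0 : ℝ) ≤ 2 ^ (s - 2 * α) * latNorm h ^ (s - 2 * α) := by positivity
      nlinarith
  have expand : latNorm (h + m) ^ (s - 2 * α) / (latNorm h ^ (s + 1) * latNorm m ^ (s - 1))
      = latNorm (h + m) ^ (s - 2 * α) * latNorm h ^ (-(s + 1)) * latNorm m ^ (1 - s) := by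
    rw [Real.rpow_neg ha0.le, show (1 - s : ℝ) = -(s - 1) by ring, Real.rpow_neg hb0.le,
      div_eq_mul_inv, mul_inv]
    ring
  rw [expand]
  have hbe : (0 : ℝ) ≤ latNorm m ^ (1 - s) := Real.rpow_nonneg hb0.le _
  have hane : (0 : ℝ) ≤ latNorm h ^ (-(s + 1)) := Real.rpow_nonneg ha0.le _
  have step3 : latNorm h ^ (s - 2 * α) * latNorm h ^ (-(s + 1)) = latNorm h ^ (-(2 * α + 1)) := by
    rw [← Real.rpow_add ha0]
    congr 1
    ring
  have step4 : latNorm h ^ (-(2 * α + 1)) ≤ latNorm m ^ (-(2 * α + 1)) := by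
    calc latNorm h ^ (-(2 * α + 1)) ≤ (2 * latNorm m) ^ (-(2 * α + 1)) :=
          Real.rpow_le_rpow_of_nonpos (by linarith) hle (by linarith)
      _ = 2 ^ (-(2 * α + 1)) * latNorm m ^ (-(2 * α + 1)) :=
          Real.mul_rpow (by norm_num) hb0.le
      _ ≤ 1 * latNorm m ^ (-(2 * α + 1)) := by
          apply mul_le_mul_of_nonneg_right _ (Real.rpow_nonneg hb0.le _)
          exact Real.rpow_le_one_of_one_le_of_nonpos (by norm_num) (by linarith)
      _ = latNorm m ^ (-(2 * α + 1)) := one_mul _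
  have step5 : latNorm m ^ (-(2 * α + 1)) * latNorm m ^ (1 - s) = latNorm m ^ (-(2 * α + s)) := by
    rw [← Real.rpow_add hb0]
    congr 1
    ring
  calc latNorm (h + m) ^ (s - 2 * α) * latNorm h ^ (-(s + 1)) * latNorm m ^ (1 - s)
      ≤ (2 ^ (s - 2 * α) + 2 ^ (2 * α - s)) * latNorm h ^ (s - 2 * α)
          * latNorm h ^ (-(s + 1)) * latNorm m ^ (1 - s) := by
        apply mul_le_mul_of_nonneg_right (mul_le_mul_of_nonneg_right step1 hane) hbe
    _ = (2 ^ (s - 2 * α) + 2 ^ (2 * α - s))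
          * (latNorm h ^ (s - 2 * α) * latNorm h ^ (-(s + 1))) * latNorm m ^ (1 - s) := by ring
    _ = (2 ^ (s - 2 * α) + 2 ^ (2 * α - s)) * latNorm h ^ (-(2 * α + 1))
          * latNorm m ^ (1 - s) := by rw [step3]
    _ ≤ (2 ^ (s - 2 * α) + 2 ^ (2 * α - s)) * latNorm m ^ (-(2 * α + 1))
          * latNorm m ^ (1 - s) := by
        apply mul_le_mul_of_nonneg_right (mul_le_mul_of_nonneg_left step4 hc₁0) hbe
    _ = (2 ^ (s - 2 * α) + 2 ^ (2 * α - s))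
          * (latNorm m ^ (-(2 * α + 1)) * latNorm m ^ (1 - s)) := by ring
    _ = (2 ^ (s - 2 * α) + 2 ^ (2 * α - s)) * latNorm m ^ (-(2 * α + s)) := by rw [step5]

/-- Bound for the majorant sum over the full product lattice. -/
lemma majorant_bound {c : ℝ} (hc : 0 ≤ c) (w f g : ℤ × ℤ → ℝ)
    (hw : ∀ m, 0 ≤ w m) (hf : ∀ p, 0 ≤ f p) (hg : ∀ p, 0 ≤ g p)
    (hwsq : Summable fun m => w m ^ 2) (hsf : Summable fun p => f p ^ 2)
    (hsg : Summable fun p => g p ^ 2) :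
    Summable (fun q : (ℤ × ℤ) × (ℤ × ℤ) => c * w q.1 * f q.1 * (f q.2 * g (q.2 + q.1))) ∧
      ∑' q : (ℤ × ℤ) × (ℤ × ℤ), c * w q.1 * f q.1 * (f q.2 * g (q.2 + q.1))
        ≤ c * Real.sqrt (∑' m, w m ^ 2) * (∑' p, f p ^ 2) * Real.sqrt (∑' p, g p ^ 2) := by
  have hF2_0 : 0 ≤ ∑' p, f p ^ 2 := tsum_nonneg fun p => sq_nonneg _
  have hG2_0 : 0 ≤ ∑' p, g p ^ 2 := tsum_nonneg fun p => sq_nonneg _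
  -- shifted copies of g are square-summable with the same sum
  have hshift : ∀ m : ℤ × ℤ, Summable (fun h : ℤ × ℤ => g (h + m) ^ 2) := by
    intro m
    exact ((Equiv.addRight m).summable_iff (f := fun p : ℤ × ℤ => g p ^ 2)).2 hsg
  have hshift_eq : ∀ m : ℤ × ℤ, ∑' h : ℤ × ℤ, g (h + m) ^ 2 = ∑' p, g p ^ 2 := fun m =>
    (Equiv.addRight m).tsum_eq (fun p => g p ^ 2)
  have hfg : ∀ m : ℤ × ℤ, Summable (fun h : ℤ × ℤ => f h * g (h + m)) := fun m =>
    (tsum_mul_le_sqrt hf (fun h => hg _) hsf (hshift m)).1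
  have hScs : ∀ m : ℤ × ℤ, (∑' h : ℤ × ℤ, f h * g (h + m))
      ≤ Real.sqrt (∑' p, f p ^ 2) * Real.sqrt (∑' p, g p ^ 2) := by
    intro m
    have h1 := (tsum_mul_le_sqrt hf (fun h => hg _) hsf (hshift m)).2
    rwa [hshift_eq m] at h1
  have hwf := tsum_mul_le_sqrt hw hf hwsq hsf
  have hF0 : ∀ q : (ℤ × ℤ) × (ℤ × ℤ), 0 ≤ c * w q.1 * f q.1 * (f q.2 * g (q.2 + q.1)) :=
    fun q => mul_nonneg (mul_nonneg (mul_nonneg hc (hw _)) (hf _))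
      (mul_nonneg (hf _) (hg _))
  have hslice : ∀ m : ℤ × ℤ, Summable fun h : ℤ × ℤ => c * w m * f m * (f h * g (h + m)) :=
    fun m => (hfg m).mul_left _
  have hslice_sum : ∀ m : ℤ × ℤ, (∑' h : ℤ × ℤ, c * w m * f m * (f h * g (h + m)))
      = c * w m * f m * ∑' h : ℤ × ℤ, f h * g (h + m) := fun m => tsum_mul_left
  have hsum_bound : ∀ m : ℤ × ℤ, c * w m * f m * (∑' h : ℤ × ℤ, f h * g (h + m))
      ≤ c * (Real.sqrt (∑' p, f p ^ 2) * Real.sqrt (∑' p, g p ^ 2)) * (w m * f m) := by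
    intro m
    have h1 : 0 ≤ c * w m * f m := mul_nonneg (mul_nonneg hc (hw m)) (hf m)
    calc c * w m * f m * (∑' h : ℤ × ℤ, f h * g (h + m))
        ≤ c * w m * f m * (Real.sqrt (∑' p, f p ^ 2) * Real.sqrt (∑' p, g p ^ 2)) :=
          mul_le_mul_of_nonneg_left (hScs m) h1
      _ = c * (Real.sqrt (∑' p, f p ^ 2) * Real.sqrt (∑' p, g p ^ 2)) * (w m * f m) := by ring
  have hsumfun : Summable fun m : ℤ × ℤ =>
      ∑' h : ℤ × ℤ, c * w m * f m * (f h * g (h + m)) := by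
    apply Summable.of_nonneg_of_le
      (fun m => tsum_nonneg fun h => hF0 (m, h))
      (fun m => ?_)
      (hwf.1.mul_left (c * (Real.sqrt (∑' p, f p ^ 2) * Real.sqrt (∑' p, g p ^ 2))))
    rw [hslice_sum m]
    exact hsum_bound m
  have hFsummable : Summable
      (fun q : (ℤ × ℤ) × (ℤ × ℤ) => c * w q.1 * f q.1 * (f q.2 * g (q.2 + q.1))) :=
    (summable_prod_of_nonneg hF0).2 ⟨hslice, hsumfun⟩
  refine ⟨hFsummable, ?_⟩
  calc ∑' q : (ℤ × ℤ) × (ℤ × ℤ), c * w q.1 * f q.1 * (f q.2 * g (q.2 + q.1))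
      = ∑' m : ℤ × ℤ, ∑' h : ℤ × ℤ, c * w m * f m * (f h * g (h + m)) :=
        Summable.tsum_prod' hFsummable hslice
    _ = ∑' m : ℤ × ℤ, c * w m * f m * ∑' h : ℤ × ℤ, f h * g (h + m) :=
        tsum_congr hslice_sum
    _ ≤ ∑' m : ℤ × ℤ, c * (Real.sqrt (∑' p, f p ^ 2) * Real.sqrt (∑' p, g p ^ 2))
          * (w m * f m) :=
        Summable.tsum_le_tsum hsum_bound (hsumfun.congr fun m => hslice_sum m)
          (hwf.1.mul_left _)
    _ = c * (Real.sqrt (∑' p, f p ^ 2) * Real.sqrt (∑' p, g p ^ 2))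
          * ∑' m : ℤ × ℤ, w m * f m := tsum_mul_left
    _ ≤ c * (Real.sqrt (∑' p, f p ^ 2) * Real.sqrt (∑' p, g p ^ 2))
          * (Real.sqrt (∑' m, w m ^ 2) * Real.sqrt (∑' p, f p ^ 2)) := by
        apply mul_le_mul_of_nonneg_left hwf.2
        positivity
    _ = c * Real.sqrt (∑' m, w m ^ 2)
          * (Real.sqrt (∑' p, f p ^ 2) * Real.sqrt (∑' p, f p ^ 2))
          * Real.sqrt (∑' p, g p ^ 2) := by ring
    _ = c * Real.sqrt (∑' m, w m ^ 2) * (∑' p, f p ^ 2) * Real.sqrt (∑' p, g p ^ 2) := by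
        rw [Real.mul_self_sqrt hF2_0]

set_option maxHeartbeats 1000000 in
theorem stmt3 (α s : ℝ) (hα : 1 / 2 < α) (hs : 0 ≤ s) :
    ∃ C : ℝ, 0 < C ∧ ∀ f₁ g : ℤ × ℤ → ℝ,
      (∀ p, 0 ≤ f₁ p) → (∀ p, 0 ≤ g p) →
      f₁ 0 = 0 → g 0 = 0 →
      Summable (fun p => f₁ p ^ 2) → Summable (fun p => g p ^ 2) →
      (∑' q : {q : (ℤ × ℤ) × (ℤ × ℤ) // q.1 ≠ 0 ∧ q.2 ≠ 0 ∧ 2 * latNorm q.2 ≤ latNorm q.1},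
          latNorm (q.1.1 + q.1.2) ^ (s - 2 * α) /
              (latNorm q.1.1 ^ (s + 1) * latNorm q.1.2 ^ (s - 1)) *
            f₁ q.1.1 * f₁ q.1.2 * g (q.1.1 + q.1.2))
        ≤ C * (∑' p, f₁ p ^ 2) * Real.sqrt (∑' p, g p ^ 2) := by
  have ht2 : 2 < 2 * (2 * α + s) := by linarith
  have hW : Summable (fun m : ℤ × ℤ => latNorm m ^ (-(2 * (2 * α + s)))) :=
    summable_latNorm_rpow ht2
  have hc₁0 : (0 : ℝ) < 2 ^ (s - 2 * α) + 2 ^ (2 * α - s) := by positivity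
  have hW0 : 0 ≤ ∑' m : ℤ × ℤ, latNorm m ^ (-(2 * (2 * α + s))) :=
    tsum_nonneg fun m => Real.rpow_nonneg (latNorm_nonneg m) _
  refine ⟨(2 ^ (s - 2 * α) + 2 ^ (2 * α - s))
    * (Real.sqrt (∑' m : ℤ × ℤ, latNorm m ^ (-(2 * (2 * α + s)))) + 1), by positivity, ?_⟩
  intro f g hf hg hf0 hg0 hsf hsg
  -- the weight
  have hwsq : ∀ m : ℤ × ℤ, (latNorm m ^ (-(2 * α + s))) ^ 2
      = latNorm m ^ (-(2 * (2 * α + s))) := by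
    intro m
    rw [← Real.rpow_natCast (latNorm m ^ (-(2 * α + s))) 2,
      ← Real.rpow_mul (latNorm_nonneg m)]
    congr 1
    push_cast
    ring
  have hw_sq_summable : Summable fun m : ℤ × ℤ => (latNorm m ^ (-(2 * α + s))) ^ 2 :=
    hW.congr fun m => (hwsq m).symm
  have hWsum : ∑' m : ℤ × ℤ, (latNorm m ^ (-(2 * α + s))) ^ 2
      = ∑' m : ℤ × ℤ, latNorm m ^ (-(2 * (2 * α + s))) := tsum_congr hwsq
  have hw0 : ∀ m : ℤ × ℤ, 0 ≤ latNorm m ^ (-(2 * α + s)) :=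
    fun m => Real.rpow_nonneg (latNorm_nonneg m) _
  obtain ⟨hFsummable, hFbound⟩ := majorant_bound hc₁0.le
    (fun m => latNorm m ^ (-(2 * α + s))) f g hw0 hf hg hw_sq_summable hsf hsg
  have hF2_0 : 0 ≤ ∑' p, f p ^ 2 := tsum_nonneg fun p => sq_nonneg _
  -- compare the restricted sum to the majorant over the full product via the swap injection
  have key : (∑' q : {q : (ℤ × ℤ) × (ℤ × ℤ) // q.1 ≠ 0 ∧ q.2 ≠ 0 ∧
        2 * latNorm q.2 ≤ latNorm q.1},
        latNorm (q.1.1 + q.1.2) ^ (s - 2 * α) /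
            (latNorm q.1.1 ^ (s + 1) * latNorm q.1.2 ^ (s - 1)) *
          f q.1.1 * f q.1.2 * g (q.1.1 + q.1.2))
      ≤ ∑' q : (ℤ × ℤ) × (ℤ × ℤ), (2 ^ (s - 2 * α) + 2 ^ (2 * α - s))
          * latNorm q.1 ^ (-(2 * α + s)) * f q.1 * (f q.2 * g (q.2 + q.1)) := by
    have hinj : Function.Injective
        (fun q : {q : (ℤ × ℤ) × (ℤ × ℤ) // q.1 ≠ 0 ∧ q.2 ≠ 0 ∧
          2 * latNorm q.2 ≤ latNorm q.1} => (q.1.2, q.1.1)) := by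
      intro x y hxy
      have h1 : x.1.2 = y.1.2 := congrArg Prod.fst hxy
      have h2 : x.1.1 = y.1.1 := congrArg Prod.snd hxy
      exact Subtype.ext (Prod.ext h2 h1)
    have hle : ∀ q : {q : (ℤ × ℤ) × (ℤ × ℤ) // q.1 ≠ 0 ∧ q.2 ≠ 0 ∧
        2 * latNorm q.2 ≤ latNorm q.1},
        latNorm (q.1.1 + q.1.2) ^ (s - 2 * α) /
            (latNorm q.1.1 ^ (s + 1) * latNorm q.1.2 ^ (s - 1)) *
          f q.1.1 * f q.1.2 * g (q.1.1 + q.1.2)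
        ≤ (2 ^ (s - 2 * α) + 2 ^ (2 * α - s))
            * latNorm q.1.2 ^ (-(2 * α + s)) * f q.1.2 * (f q.1.1 * g (q.1.1 + q.1.2)) := by
      rintro ⟨⟨h, m⟩, hh, hm, hlm⟩
      have hK := kernel_bound hα hs hh hm hlm
      have hprod : 0 ≤ f h * f m * g (h + m) :=
        mul_nonneg (mul_nonneg (hf h) (hf m)) (hg _)
      calc latNorm (h + m) ^ (s - 2 * α) /
              (latNorm h ^ (s + 1) * latNorm m ^ (s - 1)) * f h * f m * g (h + m)
          = latNorm (h + m) ^ (s - 2 * α) /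
              (latNorm h ^ (s + 1) * latNorm m ^ (s - 1)) * (f h * f m * g (h + m)) := by ring
        _ ≤ (2 ^ (s - 2 * α) + 2 ^ (2 * α - s)) * latNorm m ^ (-(2 * α + s))
              * (f h * f m * g (h + m)) := mul_le_mul_of_nonneg_right hK hprod
        _ = (2 ^ (s - 2 * α) + 2 ^ (2 * α - s)) * latNorm m ^ (-(2 * α + s)) * f m
              * (f h * g (h + m)) := by ring
    have hterm0 : ∀ q : {q : (ℤ × ℤ) × (ℤ × ℤ) // q.1 ≠ 0 ∧ q.2 ≠ 0 ∧
        2 * latNorm q.2 ≤ latNorm q.1},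
        0 ≤ latNorm (q.1.1 + q.1.2) ^ (s - 2 * α) /
            (latNorm q.1.1 ^ (s + 1) * latNorm q.1.2 ^ (s - 1)) *
          f q.1.1 * f q.1.2 * g (q.1.1 + q.1.2) := by
      intro q
      have hK0 : 0 ≤ latNorm (q.1.1 + q.1.2) ^ (s - 2 * α) /
          (latNorm q.1.1 ^ (s + 1) * latNorm q.1.2 ^ (s - 1)) :=
        div_nonneg (Real.rpow_nonneg (latNorm_nonneg _) _)
          (mul_nonneg (Real.rpow_nonneg (latNorm_nonneg _) _)
            (Real.rpow_nonneg (latNorm_nonneg _) _))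
      exact mul_nonneg (mul_nonneg (mul_nonneg hK0 (hf _)) (hf _)) (hg _)
    have hFnonneg : ∀ q : (ℤ × ℤ) × (ℤ × ℤ),
        0 ≤ (2 ^ (s - 2 * α) + 2 ^ (2 * α - s))
          * latNorm q.1 ^ (-(2 * α + s)) * f q.1 * (f q.2 * g (q.2 + q.1)) :=
      fun q => mul_nonneg (mul_nonneg (mul_nonneg hc₁0.le (hw0 _)) (hf _))
        (mul_nonneg (hf _) (hg _))
    have hcomp : Summable (fun q : {q : (ℤ × ℤ) × (ℤ × ℤ) // q.1 ≠ 0 ∧ q.2 ≠ 0 ∧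
        2 * latNorm q.2 ≤ latNorm q.1} =>
        (2 ^ (s - 2 * α) + 2 ^ (2 * α - s))
          * latNorm q.1.2 ^ (-(2 * α + s)) * f q.1.2 * (f q.1.1 * g (q.1.1 + q.1.2))) := by
      have hcomp0 := hFsummable.comp_injective hinj
      exact hcomp0.congr (fun q => rfl)
    have hsummable_lhs : Summable (fun q : {q : (ℤ × ℤ) × (ℤ × ℤ) // q.1 ≠ 0 ∧ q.2 ≠ 0 ∧
        2 * latNorm q.2 ≤ latNorm q.1} =>
        latNorm (q.1.1 + q.1.2) ^ (s - 2 * α) /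
            (latNorm q.1.1 ^ (s + 1) * latNorm q.1.2 ^ (s - 1)) *
          f q.1.1 * f q.1.2 * g (q.1.1 + q.1.2)) :=
      Summable.of_nonneg_of_le hterm0 hle hcomp
    exact Summable.tsum_le_tsum_of_inj _ hinj (fun c _ => hFnonneg c) (fun q => hle q) hsummable_lhs hFsummable
  refine key.trans (hFbound.trans ?_)
  rw [hWsum]
  have h1 : (2 ^ (s - 2 * α) + 2 ^ (2 * α - s))
      * Real.sqrt (∑' m : ℤ × ℤ, latNorm m ^ (-(2 * (2 * α + s))))
      ≤ (2 ^ (s - 2 * α) + 2 ^ (2 * α - s))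
        * (Real.sqrt (∑' m : ℤ × ℤ, latNorm m ^ (-(2 * (2 * α + s)))) + 1) := by
    nlinarith [hc₁0.le]
  exact mul_le_mul_of_nonneg_right (mul_le_mul_of_nonneg_right h1 hF2_0) (Real.sqrt_nonneg _)
end
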